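/- For all x, y ∈ ℝ², it holds that ⟨x − y, g(x) − g(y)⟩ ≤ 0, where ⟨·,·⟩ denotes the standard inner product on ℝ². -/

import Mathlib

/-- The repulsive vector field from the boundary of the disk of radius `R`
(Section 7 of the paper). -/
noncomputable def gfield (ρ R : ℝ) (x : EuclideanSpace ℝ (Fin 2)) :
    EuclideanSpace ℝ (Fin 2) :=
  if ‖x‖ < R - ρ / 2 then 0
  else if ‖x‖ < R then ((R - ρ / 2) - ‖x‖) • (‖x‖⁻¹ • x)
  else -(ρ / 2) • (‖x‖⁻¹ • x)

noncomputable def phi (ρ R r : ℝ) : ℝ :=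
  if r < R - ρ / 2 then 0 else if r < R then (R - ρ / 2) - r else -(ρ / 2)

lemma phi_nonpos (ρ R r : ℝ) (hρ : 0 < ρ) : phi ρ R r ≤ 0 := by
  unfold phi; split_ifs with h1 h2 <;> linarith

lemma phi_anti (ρ R : ℝ) (hρ : 0 < ρ) {a b : ℝ} (hab : a ≤ b) :
    phi ρ R b ≤ phi ρ R a := by
  unfold phi; split_ifs <;> linarith

lemma gfield_eq (ρ R : ℝ) (x : EuclideanSpace ℝ (Fin 2)) :
    gfield ρ R x = (phi ρ R ‖x‖ * ‖x‖⁻¹) • x := by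
  unfold gfield phi
  split_ifs with h1 h2
  · simp
  · rw [smul_smul]
  · rw [smul_smul]

lemma term_bound (p u v s : ℝ) (hu : 0 ≤ u) (hp : p ≤ 0) (hs : s ≤ u * v)
    (hz : u = 0 → p = 0) : p * u⁻¹ * (u ^ 2 - s) ≤ p * (u - v) := by
  rcases eq_or_lt_of_le hu with h | h
  · simp [hz h.symm]
  · have h3 : s / u ≤ v := (div_le_iff₀ h).mpr (by linarith)
    calc p * u⁻¹ * (u ^ 2 - s) = p * (u - s / u) := by field_simp
    _ ≤ p * (u - v) := mul_le_mul_of_nonpos_left (by linarith) hp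

theorem stmt_15 (ρ R : ℝ) (hρ : 0 < ρ) (hρR : ρ ≤ R) :
    ∀ x y : EuclideanSpace ℝ (Fin 2),
      (inner ℝ (x - y) (gfield ρ R x - gfield ρ R y) : ℝ) ≤ 0 := by
  intro x y
  rw [gfield_eq, gfield_eq]
  set a := ‖x‖ with hadef
  set b := ‖y‖ with hbdef
  have ha : 0 ≤ a := norm_nonneg x
  have hb : 0 ≤ b := norm_nonneg y
  have hpa := phi_nonpos ρ R a hρ
  have hpb := phi_nonpos ρ R b hρ
  have hs : (inner ℝ x y : ℝ) ≤ a * b := real_inner_le_norm x y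
  have h0 : (0 : ℝ) < R - ρ / 2 := by linarith
  have hz : ∀ r : ℝ, r = 0 → phi ρ R r = 0 := by
    intro r hr
    simp [phi, hr, h0]
  have expand : (inner ℝ (x - y)
        ((phi ρ R a * a⁻¹) • x - (phi ρ R b * b⁻¹) • y) : ℝ)
      = (phi ρ R a * a⁻¹) * (a ^ 2 - (inner ℝ x y : ℝ))
        + (phi ρ R b * b⁻¹) * (b ^ 2 - (inner ℝ x y : ℝ)) := by
    simp only [inner_sub_left, inner_sub_right, real_inner_smul_right,
      real_inner_self_eq_norm_sq, ← hadef, ← hbdef]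
    rw [real_inner_comm y x]
    ring
  rw [expand]
  have t1 : (phi ρ R a * a⁻¹) * (a ^ 2 - (inner ℝ x y : ℝ)) ≤ phi ρ R a * (a - b) :=
    term_bound _ _ _ _ ha hpa hs (hz a)
  have t2 : (phi ρ R b * b⁻¹) * (b ^ 2 - (inner ℝ x y : ℝ)) ≤ phi ρ R b * (b - a) := by
    refine term_bound _ _ _ _ hb hpb ?_ (hz b)
    calc (inner ℝ x y : ℝ) ≤ a * b := hs
    _ = b * a := mul_comm a b
  have final : phi ρ R a * (a - b) + phi ρ R b * (b - a) ≤ 0 := by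
    rcases le_total a b with h | h
    · nlinarith [phi_anti ρ R hρ h]
    · nlinarith [phi_anti ρ R hρ h]
  linarith
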